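/- arXiv:2012.12017 — 7 statements merged into one kernel-verified Lean document; each statement's English description precedes it below -/
import Mathlib

section
/- Let k ≥ 2 and let A = {a_0, a_1, ..., a_k} be a set of integers with 0 = a_0 < a_1 < ... < a_k and gcd(a_1, ..., a_k) = 1. For a positive integer t, let h_t = (∑_{i=2}^{k} (t·a_i − 1)) − 1 and c′_t = ∑_{i=1}^{k−1} a_i·(t·a_{i+1} − 1). If n is an integer with c′_t − a_k < n < c′_t, then there exist at least t distinct nonnegative integer k-tuples (x_{1,s}, x_{2,s}, ..., x_{k,s}), s = 1, ..., t, such that n = x_{1,s}·a_1 + x_{2,s}·a_2 + ... + x_{k,s}·a_k and x_{1,s} + x_{2,s} + ... + x_{k,s} ≤ h_t for each s. -/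
private lemma sum_pair_shift (s : Finset ℕ) {p q : ℕ} (hp : p ∈ s) (hq : q ∈ s) (hpq : p ≠ q)
    (f g : ℕ → ℤ) (d : ℤ) (hoff : ∀ i ∈ s, i ≠ p → i ≠ q → f i = g i)
    (hsum : f p + f q = g p + g q + d) : ∑ i ∈ s, f i = (∑ i ∈ s, g i) + d := by
  have hsub : ({p, q} : Finset ℕ) ⊆ s := by
    intro i hi
    rcases Finset.mem_insert.1 hi with rfl | hi
    · exact hp
    · rw [Finset.mem_singleton] at hi; subst hi; exact hq
  have h0 : ∀ i ∈ s, i ∉ ({p, q} : Finset ℕ) → f i - g i = 0 := by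
    intro i hi hni
    simp only [Finset.mem_insert, Finset.mem_singleton, not_or] at hni
    rw [hoff i hi hni.1 hni.2, sub_self]
  have h1 : ∑ i ∈ ({p, q} : Finset ℕ), (f i - g i) = ∑ i ∈ s, (f i - g i) :=
    Finset.sum_subset hsub h0
  rw [Finset.sum_pair hpq] at h1
  have h2 : ∑ i ∈ s, (f i - g i) = d := by rw [← h1]; linarith
  rw [Finset.sum_sub_distrib] at h2
  linarith

private lemma bezout_finset (s : Finset ℕ) (a : ℕ → ℤ) :
    ∃ c : ℕ → ℤ, ∑ i ∈ s, c i * a i = s.gcd a := by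
  classical
  induction s using Finset.induction with
  | empty => exact ⟨fun _ => 0, by simp⟩
  | @insert j s' hj ih =>
    obtain ⟨c, hc⟩ := ih
    refine ⟨Function.update (fun i => c i * Int.gcdB (a j) (s'.gcd a)) j
      (Int.gcdA (a j) (s'.gcd a)), ?_⟩
    rw [Finset.sum_insert hj, Finset.gcd_insert, Function.update_self]
    have h1 : ∀ i ∈ s', Function.update (fun i => c i * Int.gcdB (a j) (s'.gcd a)) j
        (Int.gcdA (a j) (s'.gcd a)) i * a i = (c i * a i) * Int.gcdB (a j) (s'.gcd a) := by
      intro i hi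
      rw [Function.update_of_ne (by rintro rfl; exact hj hi)]
      show c i * Int.gcdB (a j) (s'.gcd a) * a i = c i * a i * Int.gcdB (a j) (s'.gcd a)
      ring
    rw [Finset.sum_congr rfl h1, ← Finset.sum_mul, hc]
    have h2 : (GCDMonoid.gcd (a j) (s'.gcd a) : ℤ) = ((a j).gcd (s'.gcd a) : ℤ) := rfl
    rw [h2, Int.gcd_eq_gcd_ab]
    ring

set_option maxHeartbeats 1000000 in
private lemma reduce_rep (k : ℕ) (a : ℕ → ℤ) (hpos : ∀ i, 1 ≤ i → i ≤ k → 0 < a i)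
    (n : ℤ) (hn : ∃ y : ℕ → ℤ, ∑ i ∈ Finset.Icc 1 k, y i * a i = n) :
    ∃ x : ℕ → ℤ, (∑ i ∈ Finset.Icc 1 k, x i * a i = n) ∧
      ∀ i, 1 ≤ i → i ≤ k - 1 → 0 ≤ x i ∧ x i < a (i + 1) := by
  suffices h : ∀ j, j ≤ k - 1 → ∃ x : ℕ → ℤ, (∑ i ∈ Finset.Icc 1 k, x i * a i = n) ∧
      ∀ i, 1 ≤ i → i ≤ j → 0 ≤ x i ∧ x i < a (i + 1) by
    obtain ⟨x, h1, h2⟩ := h (k - 1) le_rfl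
    exact ⟨x, h1, h2⟩
  intro j
  induction j with
  | zero =>
    intro _
    obtain ⟨y, hy⟩ := hn
    exact ⟨y, hy, fun i h1 h2 => by omega⟩
  | succ j ih =>
    intro hj
    obtain ⟨x, hx1, hx2⟩ := ih (by omega)
    have hmpos : 0 < a (j + 2) := hpos (j + 2) (by omega) (by omega)
    set x' : ℕ → ℤ := Function.update (Function.update x (j + 1) (x (j + 1) % a (j + 2)))
      (j + 2) (x (j + 2) + (x (j + 1) / a (j + 2)) * a (j + 1)) with hx'def
    have hx'1 : x' (j + 1) = x (j + 1) % a (j + 2) := by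
      rw [hx'def, Function.update_of_ne (by omega), Function.update_self]
    have hx'2 : x' (j + 2) = x (j + 2) + (x (j + 1) / a (j + 2)) * a (j + 1) := by
      rw [hx'def, Function.update_self]
    have hx'3 : ∀ i, i ≠ j + 1 → i ≠ j + 2 → x' i = x i := by
      intro i h1 h2
      rw [hx'def, Function.update_of_ne h2, Function.update_of_ne h1]
    refine ⟨x', ?_, ?_⟩
    · have key : a (j + 2) * (x (j + 1) / a (j + 2)) + x (j + 1) % a (j + 2) = x (j + 1) :=
        Int.mul_ediv_add_emod _ _
      have h := sum_pair_shift (Finset.Icc 1 k) (p := j + 1) (q := j + 2)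
        (Finset.mem_Icc.2 ⟨by omega, by omega⟩) (Finset.mem_Icc.2 ⟨by omega, by omega⟩)
        (by omega)
        (fun i => x' i * a i) (fun i => x i * a i) 0
        (fun i _ h1 h2 => by
          show x' i * a i = x i * a i
          rw [hx'3 i h1 h2])
        (by
          show x' (j + 1) * a (j + 1) + x' (j + 2) * a (j + 2)
            = x (j + 1) * a (j + 1) + x (j + 2) * a (j + 2) + 0
          rw [hx'1, hx'2]
          linear_combination (a (j + 1)) * key)
      rw [h, add_zero]
      exact hx1
    · intro i h1 h2
      by_cases hij : i = j + 1
      · subst hij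
        rw [hx'1]
        exact ⟨Int.emod_nonneg _ (ne_of_gt hmpos), Int.emod_lt_of_pos _ hmpos⟩
      · rw [hx'3 i hij (by omega)]
        exact hx2 i h1 (by omega)

private def famF (a v : ℕ → ℤ) (m s i : ℕ) : ℤ :=
  if i = m + 1 then v (m + 1) + (s : ℤ) * a (m + 2)
  else if i = m + 2 then v (m + 2) - (s : ℤ) * a (m + 1) else v i

set_option maxHeartbeats 2000000 in
theorem stmt2 (k : ℕ) (hk : 2 ≤ k) (a : ℕ → ℤ) (ha0 : a 0 = 0)
    (hinc : ∀ i < k, a i < a (i + 1))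
    (hgcd : Finset.gcd (Finset.Icc 1 k) a = 1)
    (t : ℕ) (ht : 0 < t) (n : ℤ)
    (hn1 : (∑ i ∈ Finset.Icc 1 (k - 1), a i * ((t : ℤ) * a (i + 1) - 1)) - a k < n)
    (hn2 : n < ∑ i ∈ Finset.Icc 1 (k - 1), a i * ((t : ℤ) * a (i + 1) - 1)) :
    ∃ X : Finset (Fin k → ℤ), t ≤ X.card ∧ ∀ x ∈ X,
      (∀ i, 0 ≤ x i) ∧ n = (∑ i : Fin k, x i * a (i.val + 1)) ∧
      (∑ i : Fin k, x i) ≤ (∑ i ∈ Finset.Icc 2 k, ((t : ℤ) * a i - 1)) - 1 := by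
  classical
  obtain ⟨m, rfl⟩ : ∃ m, k = m + 2 := ⟨k - 2, by omega⟩
  have hred : m + 2 - 1 = m + 1 := by omega
  rw [hred] at hn1 hn2
  -- order facts
  have hmono : ∀ j, j ≤ m + 2 → ∀ i, i ≤ j → a i ≤ a j := by
    intro j
    induction j with
    | zero =>
      intro _ i hi
      have : i = 0 := by omega
      subst this
      exact le_rfl
    | succ j ih =>
      intro hj i hi
      rcases Nat.eq_or_lt_of_le hi with rfl | h
      · exact le_rfl
      · exact (ih (by omega) i (by omega)).trans (le_of_lt (hinc j (by omega)))
  have h01 : 0 < a 1 := by have := hinc 0 (by omega); rwa [ha0] at this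
  have hpos : ∀ i, 1 ≤ i → i ≤ m + 2 → 0 < a i := fun i h1 h2 =>
    lt_of_lt_of_le h01 (hmono i h2 1 h1)
  have hann : ∀ i, i ≤ m + 2 → 0 ≤ a i := by
    intro i hi
    rcases Nat.eq_zero_or_pos i with rfl | h
    · rw [ha0]
    · exact le_of_lt (hpos i h hi)
  have hak1 : 0 < a (m + 2) := hpos _ (by omega) le_rfl
  have haKK : a (m + 1) < a (m + 2) := hinc (m + 1) (by omega)
  have ht1 : (0:ℤ) ≤ (t:ℤ) - 1 := by
    have : (1:ℤ) ≤ (t:ℤ) := by exact_mod_cast ht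
    linarith
  -- representation with reduced digits
  obtain ⟨c, hc⟩ := bezout_finset (Finset.Icc 1 (m + 2)) a
  rw [hgcd] at hc
  obtain ⟨v, hv1, hv2⟩ := reduce_rep (m + 2) a hpos n
    ⟨fun i => n * c i, by simp only [mul_assoc]; rw [← Finset.mul_sum, hc, mul_one]⟩
  rw [hred] at hv2
  set P := ∑ i ∈ Finset.Icc 1 (m + 1), a i * a (i + 1) with hP
  set Q := ∑ i ∈ Finset.Icc 1 (m + 1), a i with hQ
  set R := ∑ i ∈ Finset.Icc 1 (m + 1), a (i + 1) with hR
  set A := ∑ i ∈ Finset.Icc 1 (m + 1), v i * a i with hA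
  set XS := ∑ i ∈ Finset.Icc 1 (m + 1), v i with hXS
  have hS1 : ∑ i ∈ Finset.Icc 1 (m + 1), a i * ((t:ℤ) * a (i + 1) - 1) = (t:ℤ) * P - Q := by
    rw [hP, hQ, Finset.mul_sum, ← Finset.sum_sub_distrib]
    exact Finset.sum_congr rfl fun i _ => by ring
  rw [hS1] at hn1 hn2
  have hsplit : ∀ g : ℕ → ℤ, ∑ i ∈ Finset.Icc 1 (m + 2), g i
      = (∑ i ∈ Finset.Icc 1 (m + 1), g i) + g (m + 2) :=
    fun g => Finset.sum_Icc_succ_top (by omega) g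
  have hF1 : A + v (m + 2) * a (m + 2) = n := by
    rw [hA, ← hsplit fun i => v i * a i]
    exact hv1
  have hvub : ∀ i, 1 ≤ i → i ≤ m + 1 → v i ≤ a (i + 1) - 1 := by
    intro i h1 h2
    have := (hv2 i h1 h2).2
    omega
  have hF2 : A ≤ P - Q := by
    rw [hA, hP, hQ, ← Finset.sum_sub_distrib]
    apply Finset.sum_le_sum
    intro i hi
    rw [Finset.mem_Icc] at hi
    have h1 := hvub i hi.1 hi.2
    have h2 := hann i (by omega)
    have h3 := mul_le_mul_of_nonneg_right h1 h2
    linarith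
  have hF3 : a (m + 1) * a (m + 2) ≤ P := by
    rw [hP]
    have hmem : m + 1 ∈ Finset.Icc 1 (m + 1) := Finset.mem_Icc.2 ⟨by omega, le_rfl⟩
    apply Finset.single_le_sum (f := fun i => a i * a (i + 1)) ?_ hmem
    intro i hi
    rw [Finset.mem_Icc] at hi
    exact mul_nonneg (hann i (by omega)) (hann (i + 1) (by omega))
  have hF4 : XS * a (m + 2) ≤ a (m + 2) * R - ((m:ℤ) + 1) * a (m + 2) - P + Q + A := by
    rw [hXS, Finset.sum_mul]
    have step : ∀ i ∈ Finset.Icc 1 (m + 1), v i * a (m + 2)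
        ≤ (a (m + 2) * a (i + 1) - a i * a (i + 1) + a i - a (m + 2)) + v i * a i := by
      intro i hi
      rw [Finset.mem_Icc] at hi
      have h1 := hvub i hi.1 hi.2
      have h2 : a i ≤ a (m + 2) := hmono (m + 2) le_rfl i (by omega)
      have h4 := mul_le_mul_of_nonneg_right h1 (by linarith : (0:ℤ) ≤ a (m + 2) - a i)
      linarith
    calc ∑ i ∈ Finset.Icc 1 (m + 1), v i * a (m + 2)
        ≤ ∑ i ∈ Finset.Icc 1 (m + 1),
            ((a (m + 2) * a (i + 1) - a i * a (i + 1) + a i - a (m + 2)) + v i * a i) :=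
          Finset.sum_le_sum step
      _ = a (m + 2) * R - ((m:ℤ) + 1) * a (m + 2) - P + Q + A := by
          rw [hR, hP, hQ, hA]
          simp only [Finset.sum_add_distrib, Finset.sum_sub_distrib, ← Finset.mul_sum,
            Finset.sum_const, Nat.card_Icc, Nat.add_sub_cancel, nsmul_eq_mul]
          push_cast
          ring
  have hn2' : A + v (m + 2) * a (m + 2) ≤ (t:ℤ) * P - Q - 1 := by
    have h : A + v (m + 2) * a (m + 2) < (t:ℤ) * P - Q := by rw [hF1]; exact hn2
    linarith [Int.lt_iff_add_one_le.mp h]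
  have hn1' : (t:ℤ) * P - Q - a (m + 2) < A + v (m + 2) * a (m + 2) := by
    rw [hF1]; exact hn1
  have key2 : (((t:ℤ) - 1) * a (m + 1) - 1) * a (m + 2) < v (m + 2) * a (m + 2) := by
    have e3 := mul_le_mul_of_nonneg_left hF3 ht1
    nlinarith [hn1', hF2, e3]
  have hxk_lb : ((t:ℤ) - 1) * a (m + 1) ≤ v (m + 2) := by
    have h := lt_of_mul_lt_mul_right key2 (le_of_lt hak1)
    linarith [Int.lt_iff_add_one_le.mp h]
  have hF5 : P ≤ a (m + 2) * (R - a (m + 2) + a (m + 1)) := by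
    have hsplit1 : P = (∑ i ∈ Finset.Icc 1 m, a i * a (i + 1)) + a (m + 1) * a (m + 2) := by
      rw [hP]; exact Finset.sum_Icc_succ_top (by omega) _
    have hsplit2 : R = (∑ i ∈ Finset.Icc 1 m, a (i + 1)) + a (m + 2) := by
      rw [hR]; exact Finset.sum_Icc_succ_top (by omega) _
    have hle : ∑ i ∈ Finset.Icc 1 m, a i * a (i + 1)
        ≤ ∑ i ∈ Finset.Icc 1 m, a (m + 2) * a (i + 1) := by
      apply Finset.sum_le_sum
      intro i hi
      rw [Finset.mem_Icc] at hi
      exact mul_le_mul_of_nonneg_right (hmono (m + 2) le_rfl i (by omega))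
        (hann (i + 1) (by omega))
    have hms : ∑ i ∈ Finset.Icc 1 m, a (m + 2) * a (i + 1)
        = a (m + 2) * ∑ i ∈ Finset.Icc 1 m, a (i + 1) := (Finset.mul_sum _ _ _).symm
    rw [hsplit1, hsplit2]
    linarith [hle, hms]
  have himg : (Finset.Icc 1 (m + 1)).image (· + 1) = Finset.Icc 2 (m + 2) := by
    rw [Finset.image_add_right_Icc]
  have hH : ∑ i ∈ Finset.Icc 2 (m + 2), ((t:ℤ) * a i - 1) = (t:ℤ) * R - ((m:ℤ) + 1) := by
    rw [← himg, Finset.sum_image (fun x _ y _ h => by simpa using h)]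
    rw [hR]
    simp only [Finset.sum_sub_distrib, ← Finset.mul_sum, Finset.sum_const, Nat.card_Icc,
      Nat.add_sub_cancel, nsmul_eq_mul]
    push_cast
    ring
  have main_bound : ∀ s : ℕ, s < t →
      XS + v (m + 2) + ((s:ℤ) * a (m + 2) - (s:ℤ) * a (m + 1))
        ≤ (t:ℤ) * R - ((m:ℤ) + 1) - 1 := by
    intro s hst
    have hs1 : (s:ℤ) ≤ (t:ℤ) - 1 := by
      have : (s:ℤ) < (t:ℤ) := by exact_mod_cast hst
      linarith
    have e1 := mul_le_mul_of_nonneg_left hF5 ht1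
    have e2 : (s:ℤ) * ((a (m + 2) - a (m + 1)) * a (m + 2))
        ≤ ((t:ℤ) - 1) * ((a (m + 2) - a (m + 1)) * a (m + 2)) :=
      mul_le_mul_of_nonneg_right hs1 (mul_nonneg (by linarith) (le_of_lt hak1))
    have key : (XS + v (m + 2) + ((s:ℤ) * a (m + 2) - (s:ℤ) * a (m + 1))) * a (m + 2)
        < ((t:ℤ) * R - ((m:ℤ) + 1)) * a (m + 2) := by
      nlinarith [hF4, hn2', e1, e2]
    have h := lt_of_mul_lt_mul_right key (le_of_lt hak1)
    linarith [Int.lt_iff_add_one_le.mp h]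
  -- conversion Fin-sum to Icc-sum
  have hconv : ∀ g : ℕ → ℤ, ∑ j : Fin (m + 2), g (j.val + 1)
      = ∑ i ∈ Finset.Icc 1 (m + 2), g i := by
    intro g
    have himg2 : (Finset.range (m + 2)).image (· + 1) = Finset.Icc 1 (m + 2) := by
      ext i
      simp only [Finset.mem_image, Finset.mem_range, Finset.mem_Icc]
      constructor
      · rintro ⟨b, hb, rfl⟩; omega
      · intro h; exact ⟨i - 1, by omega, by omega⟩
    rw [← himg2, Finset.sum_image (fun x _ y _ h => by simpa using h)]
    exact Fin.sum_univ_eq_sum_range (fun j => g (j + 1)) (m + 2)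
  have hFa : ∀ s : ℕ, famF a v m s (m + 1) = v (m + 1) + (s:ℤ) * a (m + 2) := by
    intro s; unfold famF; rw [if_pos rfl]
  have hFb : ∀ s : ℕ, famF a v m s (m + 2) = v (m + 2) - (s:ℤ) * a (m + 1) := by
    intro s; unfold famF; rw [if_neg (by omega : m + 2 ≠ m + 1), if_pos rfl]
  have hFc : ∀ (s i : ℕ), i ≠ m + 1 → i ≠ m + 2 → famF a v m s i = v i := by
    intro s i h1 h2; unfold famF; rw [if_neg h1, if_neg h2]
  have hmem1 : m + 1 ∈ Finset.Icc 1 (m + 2) := Finset.mem_Icc.2 ⟨by omega, by omega⟩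
  have hmem2 : m + 2 ∈ Finset.Icc 1 (m + 2) := Finset.mem_Icc.2 ⟨by omega, le_rfl⟩
  have hFsum : ∀ s : ℕ, ∑ i ∈ Finset.Icc 1 (m + 2), famF a v m s i * a i = n := by
    intro s
    have h := sum_pair_shift (Finset.Icc 1 (m + 2)) hmem1 hmem2 (by omega)
      (fun i => famF a v m s i * a i) (fun i => v i * a i) 0
      (fun i _ h1 h2 => by
        show famF a v m s i * a i = v i * a i
        rw [hFc s i h1 h2])
      (by
        show famF a v m s (m + 1) * a (m + 1) + famF a v m s (m + 2) * a (m + 2)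
          = v (m + 1) * a (m + 1) + v (m + 2) * a (m + 2) + 0
        rw [hFa, hFb]; ring)
    rw [h, add_zero]
    exact hv1
  have hFcoord : ∀ s : ℕ, ∑ i ∈ Finset.Icc 1 (m + 2), famF a v m s i
      = XS + v (m + 2) + ((s:ℤ) * a (m + 2) - (s:ℤ) * a (m + 1)) := by
    intro s
    have h := sum_pair_shift (Finset.Icc 1 (m + 2)) hmem1 hmem2 (by omega)
      (famF a v m s) v ((s:ℤ) * a (m + 2) - (s:ℤ) * a (m + 1))
      (fun i _ h1 h2 => hFc s i h1 h2)
      (by rw [hFa, hFb]; ring)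
    rw [h]
    have h4 : ∑ i ∈ Finset.Icc 1 (m + 2), v i = XS + v (m + 2) := by
      rw [hXS]; exact hsplit v
    rw [h4]
  have hinj : Set.InjOn (fun s => fun j : Fin (m + 2) => famF a v m s (j.val + 1))
      ↑(Finset.range t) := by
    intro s1 _ s2 _ heq
    have h : famF a v m s1 (m + 1) = famF a v m s2 (m + 1) := congrFun heq ⟨m, by omega⟩
    rw [hFa s1, hFa s2] at h
    have h2 : (s1:ℤ) * a (m + 2) = (s2:ℤ) * a (m + 2) := by linarith
    have h3 := mul_right_cancel₀ (ne_of_gt hak1) h2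
    exact_mod_cast h3
  refine ⟨(Finset.range t).image (fun s => fun j : Fin (m + 2) => famF a v m s (j.val + 1)),
    ?_, ?_⟩
  · rw [Finset.card_image_of_injOn hinj, Finset.card_range]
  · intro x hx
    obtain ⟨s, hs, rfl⟩ := Finset.mem_image.mp hx
    rw [Finset.mem_range] at hs
    have hs1 : (s:ℤ) ≤ (t:ℤ) - 1 := by
      have : (s:ℤ) < (t:ℤ) := by exact_mod_cast hs
      linarith
    refine ⟨?_, ?_, ?_⟩
    · intro j
      show (0:ℤ) ≤ famF a v m s (j.val + 1)
      by_cases h1 : j.val + 1 = m + 1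
      · rw [h1, hFa]
        have h2 := (hv2 (m + 1) (by omega) (by omega)).1
        have h3 : 0 ≤ (s:ℤ) * a (m + 2) := mul_nonneg (Int.natCast_nonneg s) (le_of_lt hak1)
        linarith
      · by_cases h2 : j.val + 1 = m + 2
        · rw [h2, hFb]
          have e := mul_le_mul_of_nonneg_right hs1 (hann (m + 1) (by omega))
          linarith [hxk_lb]
        · rw [hFc s _ h1 h2]
          have hj := j.isLt
          exact (hv2 (j.val + 1) (by omega) (by omega)).1
    · show n = ∑ i : Fin (m + 2), famF a v m s (i.val + 1) * a (i.val + 1)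
      have e1 : (∑ i : Fin (m + 2), famF a v m s (i.val + 1) * a (i.val + 1))
          = ∑ i ∈ Finset.Icc 1 (m + 2), famF a v m s i * a i :=
        hconv (fun i => famF a v m s i * a i)
      rw [e1, hFsum s]
    · show (∑ i : Fin (m + 2), famF a v m s (i.val + 1))
        ≤ (∑ i ∈ Finset.Icc 2 (m + 2), ((t:ℤ) * a i - 1)) - 1
      have e2 : (∑ i : Fin (m + 2), famF a v m s (i.val + 1))
          = ∑ i ∈ Finset.Icc 1 (m + 2), famF a v m s i := hconv (famF a v m s)
      rw [e2, hFcoord s, hH]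
      exact main_bound s hs
end

section
/- Let a_1, a_2 be positive integers with gcd(a_1, a_2) = 1 and let t be a positive integer. If n is a positive integer with n > t·a_1·a_2 − a_1 − a_2, then the equation a_1·x + a_2·y = n has at least t solutions in nonnegative integers (x, y). -/
theorem stmt4 (a₁ a₂ : ℤ) (h₁ : 0 < a₁) (h₂ : 0 < a₂) (hg : Int.gcd a₁ a₂ = 1)
    (t : ℕ) (ht : 0 < t) (n : ℤ) (hn : 0 < n)
    (hlt : (t : ℤ) * a₁ * a₂ - a₁ - a₂ < n) :
    ∃ S : Finset (ℤ × ℤ), t ≤ S.card ∧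
      ∀ p ∈ S, 0 ≤ p.1 ∧ 0 ≤ p.2 ∧ a₁ * p.1 + a₂ * p.2 = n := by
  have hcop : IsCoprime a₁ a₂ := Int.isCoprime_iff_gcd_eq_one.mpr hg
  obtain ⟨u, v, huv⟩ := hcop
  -- base solution: x = (u*n) mod a₂
  set x : ℤ := (u * n) % a₂ with hxdef
  set k : ℤ := (u * n) / a₂ with hkdef
  have hx0 : 0 ≤ x := Int.emod_nonneg _ h₂.ne'
  have hxlt : x < a₂ := Int.emod_lt_of_pos _ h₂
  have hxk : x = u * n - k * a₂ := by
    rw [hxdef, hkdef]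
    have := Int.mul_ediv_add_emod (u * n) a₂
    linarith
  set y : ℤ := v * n + k * a₁ with hydef
  have heq : a₁ * x + a₂ * y = n := by
    rw [hxk, hydef]
    have : (u * a₁ + v * a₂) * n = n := by rw [huv, one_mul]
    ring_nf
    ring_nf at this
    linarith
  -- lower bound on y
  have hy : ((t : ℤ) - 1) * a₁ ≤ y := by
    by_contra h
    push_neg at h
    have h' : y ≤ (t : ℤ) * a₁ - a₁ - 1 := by linarith
    have hb1 : a₁ * x ≤ a₁ * (a₂ - 1) := by
      have := mul_le_mul_of_nonneg_left (by linarith : x ≤ a₂ - 1) h₁.le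
      linarith
    have hb2 : a₂ * y ≤ a₂ * ((t : ℤ) * a₁ - a₁ - 1) :=
      mul_le_mul_of_nonneg_left h' h₂.le
    nlinarith
  refine ⟨(Finset.range t).image (fun j : ℕ => (x + (j:ℤ) * a₂, y - (j:ℤ) * a₁)), ?_, ?_⟩
  · rw [Finset.card_image_of_injOn, Finset.card_range]
    intro i hi j hj hij
    have : x + (i : ℤ) * a₂ = x + (j : ℤ) * a₂ := congrArg Prod.fst hij
    have : (i : ℤ) = (j : ℤ) := by
      have := mul_right_cancel₀ h₂.ne' (by linarith : (i : ℤ) * a₂ = (j : ℤ) * a₂)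
      exact this
    exact_mod_cast this
  · intro p hp
    simp only [Finset.mem_image, Finset.mem_range] at hp
    obtain ⟨j, hj, rfl⟩ := hp
    have hjt : (j : ℤ) ≤ (t : ℤ) - 1 := by
      have : (j : ℤ) < t := by exact_mod_cast hj
      linarith
    refine ⟨by positivity, ?_, by linear_combination heq⟩
    have : (j : ℤ) * a₁ ≤ ((t : ℤ) - 1) * a₁ :=
      mul_le_mul_of_nonneg_right hjt h₁.le
    simp only
    linarith
end

section
/- Let a_1, a_2 be positive integers with a_1, a_2 ≥ 2 and gcd(a_1, a_2) = 1, and let t be a positive integer. Then the equation a_1·x + a_2·y = t·a_1·a_2 − a_1 − a_2 has at most t − 1 solutions in nonnegative integers (x, y); in particular, the lower bound n > t·a_1·a_2 − a_1 − a_2 in the preceding existence result is best possible. -/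
theorem stmt5 (a₁ a₂ : ℤ) (h₁ : 2 ≤ a₁) (h₂ : 2 ≤ a₂) (hg : Int.gcd a₁ a₂ = 1)
    (t : ℕ) (ht : 0 < t) :
    {p : ℤ × ℤ | 0 ≤ p.1 ∧ 0 ≤ p.2 ∧
      a₁ * p.1 + a₂ * p.2 = (t : ℤ) * a₁ * a₂ - a₁ - a₂}.ncard ≤ t - 1 := by
  set S : Set (ℤ × ℤ) := {p : ℤ × ℤ | 0 ≤ p.1 ∧ 0 ≤ p.2 ∧
      a₁ * p.1 + a₂ * p.2 = (t : ℤ) * a₁ * a₂ - a₁ - a₂}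
  have ha₂ : (0:ℤ) < a₂ := by linarith
  have hcop : IsCoprime a₂ a₁ := by
    rw [Int.isCoprime_iff_gcd_eq_one, Int.gcd_comm]; exact hg
  -- key: for p ∈ S, a₂ ∣ p.1 + 1 and the quotient m satisfies 1 ≤ m ≤ t-1
  have key : ∀ p ∈ S, ∃ m : ℤ, p.1 + 1 = a₂ * m ∧ 1 ≤ m ∧ m ≤ (t:ℤ) - 1 := by
    rintro ⟨x, y⟩ ⟨hx, hy, heq⟩
    simp only at hx hy heq
    have hdvd : a₂ ∣ a₁ * (x + 1) := by
      refine ⟨(t:ℤ) * a₁ - 1 - y, ?_⟩; ring_nf; linarith [heq]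
    have hdvd' : a₂ ∣ x + 1 := hcop.dvd_of_dvd_mul_left hdvd
    obtain ⟨m, hm⟩ := hdvd'
    refine ⟨m, hm, ?_, ?_⟩
    · nlinarith
    · -- y = a₁ * (t - m) - 1 ≥ 0 forces t - m ≥ 1
      have hy' : a₂ * (y + 1) = a₂ * (a₁ * ((t:ℤ) - m)) := by nlinarith
      have hy2 : y + 1 = a₁ * ((t:ℤ) - m) := by
        exact mul_left_cancel₀ (ne_of_gt ha₂) hy'
      nlinarith
  have hsub : ∀ p ∈ S, (p.1 + 1) / a₂ ∈ (Finset.Icc (1:ℤ) ((t:ℤ) - 1) : Set ℤ) := by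
    intro p hp
    obtain ⟨m, hm, h1, h2⟩ := key p hp
    have : (p.1 + 1) / a₂ = m := by rw [hm]; exact Int.mul_ediv_cancel_left _ (ne_of_gt ha₂)
    simp [this, h1, h2]
  have hinj : Set.InjOn (fun p : ℤ × ℤ => (p.1 + 1) / a₂) S := by
    rintro ⟨x, y⟩ hp ⟨x', y'⟩ hq h
    obtain ⟨m, hm, -, -⟩ := key _ hp
    obtain ⟨m', hm', -, -⟩ := key _ hq
    simp only at h
    rw [hm, hm', Int.mul_ediv_cancel_left _ (ne_of_gt ha₂),
      Int.mul_ediv_cancel_left _ (ne_of_gt ha₂)] at h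
    subst h
    have hx : x = x' := by omega
    subst hx
    obtain ⟨-, -, he1⟩ := hp
    obtain ⟨-, -, he2⟩ := hq
    simp only at he1 he2
    have : a₂ * y = a₂ * y' := by linarith
    have := mul_left_cancel₀ (ne_of_gt ha₂) this
    simp [this]
  have hfin : (Finset.Icc (1:ℤ) ((t:ℤ) - 1) : Set ℤ).Finite := Finset.finite_toSet _
  have := Set.ncard_le_ncard_of_injOn _ hsub hinj hfin
  rw [Set.ncard_coe_finset] at this
  refine this.trans ?_
  rw [Int.card_Icc]
  omega
end

section
/- Let k ≥ 2 and let A = {a_0, a_1, ..., a_k} be a set of integers with 0 = a_0 < a_1 < ... < a_k and gcd(a_1, ..., a_k) = 1. Fix a positive integer t and let c′_t = ∑_{i=1}^{k−1} a_i·(t·a_{i+1} − 1). Suppose h is a positive integer, and a is an integer admitting t distinct nonnegative integer k-tuples (x_{1,s}, ..., x_{k,s}), s = 1, ..., t, with a = ∑_{i=1}^{k} x_{i,s}·a_i, ∑_{i=1}^{k} x_{i,s} = h + 1, and 0 ≤ x_{i,s} ≤ t·a_{i+1} − 1 for all 1 ≤ i ≤ k−1. If h ≥ (∑_{i=2}^{k}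 (t·a_i − 1)) − 1, then a ≥ c′_t. -/
theorem stmt6 (k : ℕ) (hk : 2 ≤ k) (a : ℕ → ℤ) (ha0 : a 0 = 0)
    (hinc : ∀ i < k, a i < a (i + 1))
    (hgcd : Finset.gcd (Finset.Icc 1 k) a = 1)
    (t : ℕ) (ht : 0 < t) (h : ℕ) (hh : 0 < h) (av : ℤ)
    (X : Finset (Fin k → ℤ)) (hcard : t ≤ X.card)
    (hX : ∀ x ∈ X, (∀ i, 0 ≤ x i) ∧
      av = (∑ i : Fin k, x i * a (i.val + 1)) ∧
      (∑ i : Fin k, x i) = (h : ℤ) + 1 ∧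
      ∀ i : Fin k, i.val + 1 ≤ k - 1 → x i ≤ (t : ℤ) * a (i.val + 2) - 1)
    (hht : (∑ i ∈ Finset.Icc 2 k, ((t : ℤ) * a i - 1)) - 1 ≤ (h : ℤ)) :
    (∑ i ∈ Finset.Icc 1 (k - 1), a i * ((t : ℤ) * a (i + 1) - 1)) ≤ av := by
  obtain ⟨x, hx⟩ := Finset.card_pos.mp (lt_of_lt_of_le ht hcard)
  obtain ⟨hpos, hav, hsum, hbd⟩ := hX x hx
  have hmono : ∀ i j : ℕ, i ≤ j → j ≤ k → a i ≤ a j := by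
    intro i j hij hjk
    induction j, hij using Nat.le_induction with
    | base => exact le_rfl
    | succ j hij ih =>
      exact le_trans (ih (by omega)) (le_of_lt (hinc j (by omega)))
  have hak : 0 ≤ a k := ha0 ▸ hmono 0 k (Nat.zero_le _) le_rfl
  set y : ℕ → ℤ := fun i => if hik : i < k then x ⟨i, hik⟩ else 0 with hy
  have hky : k - 1 + 1 = k := by omega
  have e1 : ∑ i : Fin k, x i * a (i.val + 1) = ∑ i ∈ Finset.range k, y i * a (i + 1) := by
    rw [Finset.sum_range]
    exact Finset.sum_congr rfl fun i _ => by simp [hy, i.isLt]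
  have e2 : ∑ i : Fin k, x i = ∑ i ∈ Finset.range k, y i := by
    rw [Finset.sum_range]
    exact Finset.sum_congr rfl fun i _ => by simp [hy, i.isLt]
  have e3 : ∑ i ∈ Finset.Icc 1 (k - 1), a i * ((t : ℤ) * a (i + 1) - 1)
      = ∑ i ∈ Finset.range (k - 1), a (i + 1) * ((t : ℤ) * a (i + 2) - 1) := by
    rw [← Finset.Ico_add_one_right_eq_Icc, Finset.sum_Ico_eq_sum_range]
    refine Finset.sum_congr (by simp) fun i _ => ?_
    have h1 : 1 + i = i + 1 := by omega
    rw [h1]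
  have e4 : ∑ i ∈ Finset.Icc 2 k, ((t : ℤ) * a i - 1)
      = ∑ i ∈ Finset.range (k - 1), ((t : ℤ) * a (i + 2) - 1) := by
    rw [← Finset.Ico_add_one_right_eq_Icc, Finset.sum_Ico_eq_sum_range]
    refine Finset.sum_congr (by simp) fun i _ => ?_
    have h1 : 2 + i = i + 2 := by omega
    rw [h1]
  have hsplit1 : ∑ i ∈ Finset.range k, y i * a (i + 1)
      = (∑ i ∈ Finset.range (k - 1), y i * a (i + 1)) + y (k - 1) * a k := by
    have := Finset.sum_range_succ (fun i => y i * a (i + 1)) (k - 1)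
    rw [hky] at this
    exact this
  have hsplit2 : ∑ i ∈ Finset.range k, y i = (∑ i ∈ Finset.range (k - 1), y i) + y (k - 1) := by
    have := Finset.sum_range_succ (fun i => y i) (k - 1)
    rw [hky] at this
    exact this
  set SM : ℤ := ∑ i ∈ Finset.range (k - 1), ((t : ℤ) * a (i + 2) - 1) with hSM
  set SY : ℤ := ∑ i ∈ Finset.range (k - 1), y i with hSY
  set SYA : ℤ := ∑ i ∈ Finset.range (k - 1), y i * a (i + 1) with hSYA
  have h1 : ∑ i ∈ Finset.range (k - 1), a (i + 1) * ((t : ℤ) * a (i + 2) - 1)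
      ≤ SYA + (SM - SY) * a k := by
    have hterm : ∀ i ∈ Finset.range (k - 1),
        a (i + 1) * ((t : ℤ) * a (i + 2) - 1)
        ≤ y i * a (i + 1) + (((t : ℤ) * a (i + 2) - 1) - y i) * a k := by
      intro i hi
      have hi' : i < k - 1 := Finset.mem_range.mp hi
      have hyb : y i ≤ (t : ℤ) * a (i + 2) - 1 := by
        have := hbd ⟨i, by omega⟩ (by simp; omega)
        simpa [hy, Nat.lt_of_lt_of_le hi' (Nat.sub_le k 1)] using this
      have hmle : a (i + 1) ≤ a k := hmono (i + 1) k (by omega) le_rfl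
      nlinarith [mul_le_mul_of_nonneg_left hmle
        (by linarith : (0 : ℤ) ≤ ((t : ℤ) * a (i + 2) - 1) - y i)]
    calc ∑ i ∈ Finset.range (k - 1), a (i + 1) * ((t : ℤ) * a (i + 2) - 1)
        ≤ ∑ i ∈ Finset.range (k - 1),
            (y i * a (i + 1) + (((t : ℤ) * a (i + 2) - 1) - y i) * a k) :=
          Finset.sum_le_sum hterm
      _ = SYA + (SM - SY) * a k := by
          rw [Finset.sum_add_distrib, hSYA, hSM, hSY, ← Finset.sum_sub_distrib,
            Finset.sum_mul]
  have h2 : av = SYA + y (k - 1) * a k := by rw [hav, e1, hsplit1]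
  have h3 : SY + y (k - 1) = (h : ℤ) + 1 := by
    rw [hSY, ← hsplit2, ← e2, hsum]
  have h4 : SM ≤ (h : ℤ) + 1 := by
    rw [e4] at hht; linarith
  have h5 : 0 ≤ ((h : ℤ) + 1 - SM) * a k := mul_nonneg (by linarith) hak
  have h6 : ((h : ℤ) + 1 - SM) * a k = y (k - 1) * a k - (SM - SY) * a k := by
    have hy1 : y (k - 1) = (h : ℤ) + 1 - SY := by linarith
    rw [hy1]; ring
  rw [e3]
  linarith
end

section
/- Let k ≥ 2 and let A = {a_0, a_1, ..., a_k} be a set of integers with 0 = a_0 < a_1 < ... < a_k. Let t and h be positive integers and suppose an integer a has a representation a = x_1·a_1 + x_2·a_2 + ... + x_k·a_k with nonnegative integers x_i satisfying x_1 + x_2 + ... + x_k = h + 1 and x_1 ≥ t·a_2. Then a ∈ (hA)^{(t)}, i.e., a has at least t representations as a sum of h elements of A. -/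
/-!
Write `p = a₁ < q = a₂`. Replacing `j * q` copies of `p` by `j * p` copies of `q` among the given
`h + 1` summands keeps the sum (both blocks add up to `j * p * q`) and frees `j * (q - p) ≥ 1`
places. Filling all but one of them with `a₀ = 0` gives a representation with `h` summands for
each `1 ≤ j ≤ t`, and these are told apart by their number of zeros.
-/

/-- `f : Fin h → ℤ` is a representation of `n` as a sum of `h` elements of `A`
(written in nondecreasing order). -/
def IsRep (A : Set ℤ) (h : ℕ) (n : ℤ) (f : Fin h → ℤ) : Prop :=
  (∀ i, f i ∈ A) ∧ Monotone f ∧ ∑ i, f i = n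

/-- `(hA)^{(t)}`: integers having at least `t` representations as a sum of `h`
elements of `A`. -/
def hFoldT (A : Set ℤ) (h t : ℕ) : Set ℤ :=
  {n | ∃ S : Finset (Fin h → ℤ), t ≤ S.card ∧ ∀ f ∈ S, IsRep A h n f}

open Multiset

def sortedTuple (h : ℕ) (M : Multiset ℤ) : Fin h → ℤ := fun i => (M.sort).getD i 0

theorem ofFn_sortedTuple {h : ℕ} {M : Multiset ℤ} (hM : card M = h) :
    List.ofFn (sortedTuple h M) = M.sort := by
  subst hM
  apply List.ext_getElem (by simp)
  intro i _ hi
  simp [sortedTuple, List.getElem?_eq_getElem hi]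

theorem isRep_sortedTuple {A : Set ℤ} {h : ℕ} {M : Multiset ℤ} (hM : card M = h)
    (hMA : ∀ y ∈ M, y ∈ A) : IsRep A h M.sum (sortedTuple h M) := by
  have hsort := ofFn_sortedTuple hM
  refine ⟨fun i => hMA _ ?_, ?_, ?_⟩
  · rw [← mem_sort (· ≤ ·), ← hsort]
    exact List.mem_ofFn.2 ⟨i, rfl⟩
  · rw [← List.sortedLE_ofFn_iff, hsort]
    exact (pairwise_sort M _).sortedLE
  · rw [← List.sum_ofFn, hsort, ← sum_coe, sort_eq]

theorem sortedTuple_injOn (h : ℕ) : Set.InjOn (sortedTuple h) {M | card M = h} := by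
  intro M hM M' hM' hMM'
  rw [← sort_eq M (· ≤ ·), ← sort_eq M' (· ≤ ·), ← ofFn_sortedTuple hM, ← ofFn_sortedTuple hM',
    hMM']

theorem mem_hFoldT_of_multisets {A : Set ℤ} {h t : ℕ} {n : ℤ} (S : Finset (Multiset ℤ))
    (hS : t ≤ S.card) (hrep : ∀ M ∈ S, card M = h ∧ (∀ y ∈ M, y ∈ A) ∧ M.sum = n) :
    n ∈ hFoldT A h t := by
  refine ⟨S.image (sortedTuple h), ?_, ?_⟩
  · rwa [Finset.card_image_of_injOn fun M hM M' hM' => sortedTuple_injOn h (hrep M hM).1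
      (hrep M' hM').1]
  · simp only [Finset.mem_image, forall_exists_index, and_imp]
    rintro _ M hM rfl
    obtain ⟨hcard, hA, hsum⟩ := hrep M hM
    exact hsum ▸ isRep_sortedTuple hcard hA

def exchange (B : Multiset ℤ) (p q j : ℕ) : Multiset ℤ :=
  B - replicate (j * q) (p : ℤ) + replicate (j * p) (q : ℤ) + replicate (j * (q - p) - 1) 0

section exchange

variable {B : Multiset ℤ} {p q j : ℕ}

theorem sum_exchange (hB : replicate (j * q) (p : ℤ) ≤ B) : (exchange B p q j).sum = B.sum := by
  have hsplit := congrArg sum (tsub_add_cancel_of_le hB)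
  simp only [sum_add, sum_replicate, nsmul_eq_mul] at hsplit
  simp only [exchange, sum_add, sum_replicate, nsmul_eq_mul, smul_zero]
  push_cast at hsplit ⊢
  linear_combination hsplit

theorem card_exchange (hB : replicate (j * q) (p : ℤ) ≤ B) (hj : 0 < j) (hpq : p < q) :
    card (exchange B p q j) + 1 = card B := by
  have hjq : j * q ≤ card B := by simpa using card_le_card hB
  have hjpq : j * p < j * q := Nat.mul_lt_mul_of_pos_left hpq hj
  simp only [exchange, card_add, card_sub hB, card_replicate, Nat.mul_sub]
  omega

theorem count_zero_exchange (hp : 0 < p) (hpq : p < q) :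
    count 0 (exchange B p q j) = count 0 B + (j * (q - p) - 1) := by
  simp [exchange, count_sub, count_replicate, hp.ne', (hp.trans hpq).ne']

theorem mem_exchange {y : ℤ} (hy : y ∈ exchange B p q j) : y ∈ B ∨ y = p ∨ y = q ∨ y = 0 := by
  simp only [exchange, mem_add] at hy
  rcases hy with (hy | hy) | hy
  · exact Or.inl (mem_of_le tsub_le_self hy)
  · exact Or.inr (Or.inr (Or.inl (eq_of_mem_replicate hy)))
  · exact Or.inr (Or.inr (Or.inr (eq_of_mem_replicate hy)))

end exchange

theorem mem_hFoldT_of_exchange {A : Set ℤ} {h t p q : ℕ} (hp : 0 < p) (hpq : p < q)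
    (h0A : (0 : ℤ) ∈ A) (hpA : (p : ℤ) ∈ A) (hqA : (q : ℤ) ∈ A) {B : Multiset ℤ}
    (hBA : ∀ y ∈ B, y ∈ A) (hBcard : card B = h + 1) (hBp : t * q ≤ count (p : ℤ) B) :
    B.sum ∈ hFoldT A h t := by
  have hle : ∀ j ≤ t, replicate (j * q) (p : ℤ) ≤ B := fun j hj =>
    le_count_iff_replicate_le.1 ((Nat.mul_le_mul_right q hj).trans hBp)
  have hgap : ∀ j, 0 < j → 0 < j * (q - p) := fun j hj => Nat.mul_pos hj (by omega)
  have hinj : Set.InjOn (exchange B p q) (Finset.Icc 1 t) := by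
    intro j hj j' hj' hjj'
    simp only [Finset.coe_Icc, Set.mem_Icc] at hj hj'
    have hcount := congrArg (count 0) hjj'
    rw [count_zero_exchange hp hpq, count_zero_exchange hp hpq] at hcount
    have := hgap j hj.1
    have := hgap j' hj'.1
    exact Nat.eq_of_mul_eq_mul_right (Nat.sub_pos_of_lt hpq) (by omega)
  refine mem_hFoldT_of_multisets ((Finset.Icc 1 t).image (exchange B p q)) ?_ ?_
  · rw [Finset.card_image_of_injOn hinj, Nat.card_Icc]
    omega
  · simp only [Finset.mem_image, Finset.mem_Icc, forall_exists_index, and_imp]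
    rintro _ j hj1 hjt rfl
    refine ⟨by have := card_exchange (hle j hjt) hj1 hpq; omega, fun y hy => ?_,
      sum_exchange (hle j hjt)⟩
    rcases mem_exchange hy with hy | rfl | rfl | rfl
    exacts [hBA y hy, hpA, hqA, h0A]

theorem stmt7 (k : ℕ) (hk : 2 ≤ k) (a : ℕ → ℤ) (ha0 : a 0 = 0)
    (hinc : ∀ i < k, a i < a (i + 1))
    (t h : ℕ)
    (av : ℤ) (x : Fin k → ℤ) (hx0 : ∀ i, 0 ≤ x i)
    (hsum : av = ∑ i : Fin k, x i * a (i.val + 1))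
    (hcount : (∑ i : Fin k, x i) = (h : ℤ) + 1)
    (hx1 : (t : ℤ) * a 2 ≤ x ⟨0, by omega⟩) :
    av ∈ hFoldT {y | ∃ i ≤ k, y = a i} h t := by
  have ha1 : 0 < a 1 := ha0 ▸ hinc 0 (by omega)
  have ha12 : a 1 < a 2 := hinc 1 (by omega)
  have hxnat : ∀ i, ((x i).toNat : ℤ) = x i := fun i => Int.toNat_of_nonneg (hx0 i)
  set B : Multiset ℤ := ∑ i : Fin k, replicate (x i).toNat (a (i + 1)) with hB
  have hBsum : B.sum = av := by
    simp [B, sum_sum, sum_replicate, hxnat, hsum]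
  have hBcard : card B = h + 1 := by
    have : ((card B : ℕ) : ℤ) = h + 1 := by simp [B, card_sum, hxnat, hcount]
    omega
  have hBA : ∀ y ∈ B, y ∈ {y | ∃ i ≤ k, y = a i} := by
    intro y hy
    obtain ⟨i, -, hy⟩ := mem_sum.1 hy
    exact ⟨i + 1, i.2, eq_of_mem_replicate hy⟩
  have hBp : (x ⟨0, by omega⟩).toNat ≤ count (a 1) B := by
    rw [hB, count_sum']
    refine le_trans ?_ (Finset.single_le_sum (fun _ _ => Nat.zero_le _)
      (Finset.mem_univ ⟨0, by omega⟩))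
    simp
  lift a 1 to ℕ using ha1.le with p hp
  lift a 2 to ℕ using (ha1.trans ha12).le with q hq
  rw [← hBsum]
  refine mem_hFoldT_of_exchange (p := p) (q := q) (by omega) (by omega) ?_ ?_ ?_ hBA hBcard ?_
  exacts [⟨0, by omega, ha0.symm⟩, ⟨1, by omega, hp⟩, ⟨2, hk, hq⟩, by omega]
end

section
/- Let n ≥ 3 be an integer, A = {0, n, n+1}, t a positive integer, and h_t = t·(n+1) − 2. Then every element p of ((h_t − 1)A)^{(t)} satisfies 0 ≤ p ≤ t·n·(n+1) − 2·(n+1); that is, ((h_t − 1)A)^{(t)} ⊆ [0, t·n·(n+1) − 2·(n+1)]. -/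
/-! A nondecreasing representation of `p` as a sum of `h` elements of `{0, n, n + 1}` consists
of `h - s` zeros, `s - c` copies of `n` and `c` copies of `n + 1`, where `p = n s + c` and
`c ≤ s ≤ h`; so it is determined by `s`. If `p > (n + 1)(t n - 2)`, then `p ≤ (n + 1) s` forces
`s ≥ t n - 1`, while `s ≤ h = t (n + 1) - 3`: only `t - 1` values of `s` remain. -/

open Finset

theorem Monotone.eq_of_card_fiber_eq {α : Type*} [LinearOrder α] {h : ℕ} {f g : Fin h → α}
    (hf : Monotone f) (hg : Monotone g) (hfg : ∀ a, #{i | f i = a} = #{i | g i = a}) :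
    f = g := by
  refine List.ofFn_injective <| List.Perm.eq_of_pairwise' hf.sortedLE_ofFn.pairwise
    hg.sortedLE_ofFn.pairwise ?_
  rw [← Multiset.coe_eq_coe, ← Fin.univ_val_map, ← Fin.univ_val_map]
  refine Multiset.ext.2 fun a => ?_
  simp only [Multiset.count_map, eq_comm (a := a)]
  exact hfg a

namespace IsRep

variable {n h : ℕ} {p : ℤ} {f g : Fin h → ℤ}

theorem eq_mul_card_ne_zero_add_card (hf : IsRep {0, (n : ℤ), (n : ℤ) + 1} h p f) :
    p = n * #{i | f i ≠ 0} + #{i | f i = n + 1} := by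
  obtain ⟨hA, -, rfl⟩ := hf
  calc ∑ i, f i
      = ∑ i, (n * (if f i ≠ 0 then 1 else 0) + if f i = n + 1 then 1 else 0 : ℤ) :=
        sum_congr rfl fun i _ => by
          obtain hi | hi | (hi : f i = _) := hA i <;> rw [hi] <;> split_ifs <;> omega
    _ = _ := by simp only [sum_add_distrib, ← mul_sum, sum_boole]

theorem nonneg (hf : IsRep {0, (n : ℤ), (n : ℤ) + 1} h p f) : 0 ≤ p := by
  rw [hf.eq_mul_card_ne_zero_add_card]
  positivity

theorem le_mul_card_ne_zero (hf : IsRep {0, (n : ℤ), (n : ℤ) + 1} h p f) :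
    p ≤ (n + 1) * #{i | f i ≠ 0} := by
  have : #{i | f i = n + 1} ≤ #{i | f i ≠ 0} :=
    card_le_card <| monotone_filter_right _ fun _ _ (hi : _ = _) => by omega
  rw [hf.eq_mul_card_ne_zero_add_card]
  linarith

theorem card_ne_zero_eq_add (hf : IsRep {0, (n : ℤ), (n : ℤ) + 1} h p f) (hn : n ≠ 0) :
    #{i | f i ≠ 0} = #{i | f i = n} + #{i | f i = n + 1} := by
  have hunion : univ.filter (f · ≠ 0) = univ.filter (f · = n) ∪ univ.filter (f · = n + 1) := by
    ext i
    obtain hi | hi | (hi : f i = _) := hf.1 i <;>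
      simp only [mem_filter, mem_univ, true_and, mem_union, hi] <;> grind
  rw [hunion, card_union_of_disjoint (disjoint_filter.2 fun _ _ h1 h2 => by omega)]

theorem card_fiber_eq_zero (hf : IsRep {0, (n : ℤ), (n : ℤ) + 1} h p f) {a : ℤ}
    (ha : a ∉ ({0, (n : ℤ), (n : ℤ) + 1} : Set ℤ)) : #{i | f i = a} = 0 :=
  card_eq_zero.2 <| filter_eq_empty_iff.2 fun i _ hi => ha (hi ▸ hf.1 i)

theorem eq_of_card_ne_zero_eq (hf : IsRep {0, (n : ℤ), (n : ℤ) + 1} h p f)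
    (hg : IsRep {0, (n : ℤ), (n : ℤ) + 1} h p g) (hfg : #{i | f i ≠ 0} = #{i | g i ≠ 0}) :
    f = g := by
  have htop : #{i | f i = n + 1} = #{i | g i = n + 1} := by
    have := hf.eq_mul_card_ne_zero_add_card.symm.trans hg.eq_mul_card_ne_zero_add_card
    rw [hfg] at this
    exact_mod_cast add_left_cancel this
  have hzero (f : Fin h → ℤ) : #{i | f i = 0} + #{i | f i ≠ 0} = h := by
    simpa using card_filter_add_card_filter_not (s := univ) (f · = 0)
  refine hf.2.1.eq_of_card_fiber_eq hg.2.1 fun a => ?_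
  obtain rfl | h0 := eq_or_ne a 0
  · have := hzero f; have := hzero g; omega
  obtain rfl | htop' := eq_or_ne a (n + 1)
  · exact htop
  obtain rfl | hmid := eq_or_ne a n
  · have hn : n ≠ 0 := by exact_mod_cast h0
    have := hf.card_ne_zero_eq_add hn
    have := hg.card_ne_zero_eq_add hn
    omega
  have ha : a ∉ ({0, (n : ℤ), (n : ℤ) + 1} : Set ℤ) := by simp [h0, hmid, htop']
  rw [hf.card_fiber_eq_zero ha, hg.card_fiber_eq_zero ha]

end IsRep

theorem stmt8 (n : ℕ) (hn : 3 ≤ n) (t : ℕ) (ht : 0 < t) :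
    hFoldT {0, (n : ℤ), (n : ℤ) + 1} (t * (n + 1) - 3) t ⊆
      Set.Icc (0 : ℤ) ((t : ℤ) * n * (n + 1) - 2 * (n + 1)) := by
  rintro p ⟨S, hS, hrep⟩
  obtain ⟨f, hf⟩ := card_pos.mp (ht.trans_le hS)
  refine ⟨(hrep f hf).nonneg, ?_⟩
  by_contra! hp
  have hmaps : ∀ g ∈ S, #{i | g i ≠ 0} ∈ Icc (t * n - 1) (t * (n + 1) - 3) := fun g hg => by
    have hlt : (t * n - 2 : ℤ) < #{i | g i ≠ 0} := by
      refine lt_of_mul_lt_mul_left ?_ (by positivity : (0 : ℤ) ≤ n + 1)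
      linarith [(hrep g hg).le_mul_card_ne_zero]
    have hle : #{i | g i ≠ 0} ≤ t * (n + 1) - 3 := card_le_univ _ |>.trans (by simp)
    rw [mem_Icc]
    omega
  have hcard := card_le_card_of_injOn (fun g : Fin _ → ℤ => #{i | g i ≠ 0}) hmaps
    fun f hf g hg => (hrep f hf).eq_of_card_ne_zero_eq (hrep g hg)
  have htn : 3 ≤ t * n := hn.trans (Nat.le_mul_of_pos_left n ht)
  have : t * (n + 1) = t * n + t := by ring
  rw [Nat.card_Icc] at hcard
  omega
end

section
/- Let A = {a_0, a_1, ..., a_k} be a finite set of integers with k ≥ 2, 0 = a_0 < a_1 < ... < a_k and gcd(a_1, ..., a_k) = 1. Then there exist nonnegative integers c and d and finite sets C ⊆ [0, c − 2] and D ⊆ [0, d − 2] of integers such that hA = C ∪ [c, h·a_k − d] ∪ (h·a_k − D) for every integer h ≥ (∑_{i=2}^{k} a_i) − k. -/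
/-!
Record a sum of `h` elements of `A` by the multiplicities `c j` of `a j` for `0 < j < k`; the
remaining summands are copies of `a k` and of `0`. So `n ∈ hA` exactly when
`∑ c j * a j ≤ n`, `∑ c j * a j ≡ n [ZMOD a k]`, and `∑ c j * (a k - a j) ≤ h * a k - n`, the
last condition saying that at most `h` summands are used.

Trading `a (j + 1)` copies of `a j` for `a j` copies of `a (j + 1)` uses fewer summands, raises
neither sum and keeps the residue, so `c` may be taken reduced: `c j < a (j + 1)`. The two sums
of a reduced `c` are at most those of `c j = a (j + 1) - 1`, which add up to
`(∑_{i ≥ 2} a i - k + 1) * a k`. Hence once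
`h ≥ ∑_{i ≥ 2} a i - k`, `n ∈ hA` iff `n` lies in the semigroup generated by `A` and
`h * a k - n` in the one generated by `a k - A`: if neither the reduced witness of the first
membership nor that of the second fits, both overshoot by a full `a k`, which that bound forbids.
Each of the two semigroups contains every integer from its conductor on and misses the one just
below; this gives `c`, `d`, `C` and `D`.
-/

open Finset Pointwise

/-- The `h`-fold sumset `hA`: all sums of `h` elements of `A` (with repetition). -/
def hFold (A : Set ℤ) (h : ℕ) : Set ℤ :=
  {n | ∃ f : Fin h → ℤ, (∀ i, f i ∈ A) ∧ ∑ i, f i = n}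

lemma hFold_eq_nsmul (A : Set ℤ) (h : ℕ) : hFold A h = h • A :=
  Set.ext fun _ => Set.mem_nsmul_iff_sum.symm

lemma Set.sum_nsmul_mem_nsmul {ι M : Type*} [AddCommMonoid M] {A : Set M} (s : Finset ι)
    (m : ι → ℕ) {x : ι → M} (hx : ∀ i ∈ s, x i ∈ A) :
    ∑ i ∈ s, m i • x i ∈ (∑ i ∈ s, m i) • A := by
  rw [Finset.sum_smul]
  exact Set.finsetSum_mem_finsetSum _ _ _ fun i hi => Set.nsmul_mem_nsmul (hx i hi)

namespace HFold

noncomputable def conductor (P : ℤ → Prop) : ℕ := sInf {t : ℕ | ∀ n : ℤ, t ≤ n → P n}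

section Conductor
variable {P : ℤ → Prop} {B : ℤ} (hP : ∀ n, P n → 0 ≤ n) (hB : ∀ n, B < n → P n)
include hP hB

lemma neg_one_le : -1 ≤ B :=
  not_lt.1 fun h => by linarith [hP _ (hB (-1) (by linarith))]

lemma toNat_add_one_mem : (B + 1).toNat ∈ {t : ℕ | ∀ n : ℤ, t ≤ n → P n} := by
  have := neg_one_le hP hB
  exact fun n hn => hB n (by omega)

lemma conductor_le : (conductor P : ℤ) ≤ B + 1 := by
  have := Nat.sInf_le (toNat_add_one_mem hP hB)
  have := neg_one_le hP hB
  unfold conductor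
  omega

lemma of_conductor_le {n : ℤ} (hn : conductor P ≤ n) : P n :=
  Nat.sInf_mem ⟨_, toNat_add_one_mem hP hB⟩ n hn

lemma not_conductor_sub_one : ¬ P (conductor P - 1) := by
  intro h
  rcases Nat.eq_zero_or_pos (conductor P) with h0 | hpos
  · rw [h0, Nat.cast_zero, zero_sub] at h
    linarith [hP _ h]
  refine Nat.notMem_of_lt_sInf (s := {t : ℕ | ∀ n : ℤ, t ≤ n → P n}) (m := conductor P - 1)
    (by unfold conductor at hpos ⊢; omega) fun n hn => ?_
  by_cases hc : (conductor P : ℤ) ≤ n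
  · exact of_conductor_le hP hB hc
  · rwa [show n = conductor P - 1 by omega]

end Conductor

theorem setOf_and_eq_union {P Q : ℤ → Prop} [DecidablePred P] [DecidablePred Q] {c d N : ℤ}
    (hP : ∀ n, P n → 0 ≤ n) (hQ : ∀ n, Q n → 0 ≤ n) (hPc : ∀ n, c ≤ n → P n) (hPc' : ¬ P (c - 1))
    (hQd : ∀ n, d ≤ n → Q n) (hQd' : ¬ Q (d - 1)) (hN : c + d - 2 ≤ N) :
    {n | P n ∧ Q (N - n)} =
      ↑{n ∈ Icc 0 (c - 2) | P n} ∪ Set.Icc c (N - d) ∪ (N - ·) '' ↑{v ∈ Icc 0 (d - 2) | Q v} := by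
  ext n
  simp only [Set.mem_ofPred_eq, Set.mem_union, Set.mem_Icc, Set.mem_image, coe_filter, mem_Icc]
  constructor
  · rintro ⟨hn, hv⟩
    by_cases h₁ : n ≤ c - 2
    · exact .inl (.inl ⟨⟨hP n hn, h₁⟩, hn⟩)
    have hcn : c ≤ n := not_lt.1 fun h => hPc' (by rwa [show c - 1 = n by omega])
    by_cases h₂ : d ≤ N - n
    · exact .inl (.inr ⟨hcn, by linarith⟩)
    have hvd : N - n ≤ d - 2 := not_lt.1 fun h => hQd' (by rwa [show d - 1 = N - n by omega])
    exact .inr ⟨N - n, ⟨⟨hQ _ hv, hvd⟩, hv⟩, by ring⟩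
  · rintro ((⟨⟨-, h₁⟩, hn⟩ | ⟨h₁, h₂⟩) | ⟨v, ⟨⟨-, h₁⟩, hv⟩, rfl⟩)
    · exact ⟨hn, hQd _ (by linarith)⟩
    · exact ⟨hPc _ h₁, hQd _ (by linarith)⟩
    · exact ⟨hPc _ (by linarith), by rwa [sub_sub_cancel]⟩

def digitSum (k : ℕ) (w c : ℕ → ℤ) : ℤ := ∑ j ∈ Ico 1 k, c j * w j

section DigitSum
variable {k : ℕ} {w c c' : ℕ → ℤ}

@[simp] lemma digitSum_zero : digitSum k w 0 = 0 := by simp [digitSum]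

lemma digitSum_add : digitSum k w (c + c') = digitSum k w c + digitSum k w c' := by
  simp [digitSum, add_mul, sum_add_distrib]

lemma digitSum_sub : digitSum k w (c - c') = digitSum k w c - digitSum k w c' := by
  simp [digitSum, sub_mul, sum_sub_distrib]

lemma digitSum_single (i : ℕ) (x : ℤ) :
    digitSum k w (Pi.single i x) = if i ∈ Ico 1 k then x * w i else 0 := by
  simp [digitSum, Pi.single_apply]

lemma digitSum_le_digitSum (hw : ∀ j ∈ Ico 1 k, 0 ≤ w j) (h : ∀ j ∈ Ico 1 k, c j ≤ c' j) :
    digitSum k w c ≤ digitSum k w c' :=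
  sum_le_sum fun j hj => mul_le_mul_of_nonneg_right (h j hj) (hw j hj)

lemma digitSum_nonneg (hw : ∀ j ∈ Ico 1 k, 0 ≤ w j) (hc : 0 ≤ c) : 0 ≤ digitSum k w c := by
  simpa using digitSum_le_digitSum (c := 0) hw fun j _ => hc j

lemma digitSum_add_digitSum_sub (q : ℤ) :
    digitSum k w c + digitSum k (q - w ·) c = q * digitSum k 1 c := by
  simp only [digitSum, ← sum_add_distrib, mul_sum]
  exact sum_congr rfl fun j _ => by simp; ring

end DigitSum

/-- `n` lies in the additive semigroup generated by `w 1, …, w (k - 1)` and `q`. -/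
def InSemigroup (k : ℕ) (w : ℕ → ℤ) (q n : ℤ) : Prop :=
  ∃ c, 0 ≤ c ∧ digitSum k w c ≤ n ∧ q ∣ n - digitSum k w c

lemma InSemigroup.nonneg {k : ℕ} {w : ℕ → ℤ} {q n : ℤ} (hw : ∀ j ∈ Ico 1 k, 0 ≤ w j)
    (h : InSemigroup k w q n) : 0 ≤ n := by
  obtain ⟨c, hc, hle, -⟩ := h
  exact (digitSum_nonneg hw hc).trans hle

lemma InSemigroup.of_lt {k : ℕ} {w c : ℕ → ℤ} {q n : ℤ} (hc : 0 ≤ c)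
    (hdvd : q ∣ n - digitSum k w c) (hlt : digitSum k w c < n + q) : InSemigroup k w q n := by
  refine ⟨c, hc, not_lt.1 fun h => ?_, hdvd⟩
  have := Int.le_of_dvd (sub_pos.2 h) (dvd_sub_comm.1 hdvd)
  linarith

/-- `c`, completed by `(n - ∑ c j * a j) / a k` copies of `a k` and by zeros, writes `n` as a sum
of `h` elements of `{a 0, …, a k}`. -/
def Represents (k : ℕ) (a : ℕ → ℤ) (h : ℕ) (n : ℤ) (c : ℕ → ℤ) : Prop :=
  0 ≤ c ∧ digitSum k a c ≤ n ∧ digitSum k (a k - a ·) c ≤ h * a k - n ∧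
    a k ∣ n - digitSum k a c

def IsReduced (k : ℕ) (a c : ℕ → ℤ) : Prop := ∀ j ∈ Ico 1 k, c j < a (j + 1)

def maxDigits (a : ℕ → ℤ) (j : ℕ) : ℤ := a (j + 1) - 1

def Refines (k : ℕ) (a c' c : ℕ → ℤ) : Prop :=
  0 ≤ c' ∧ digitSum k a c' ≤ digitSum k a c ∧
    digitSum k (a k - a ·) c' ≤ digitSum k (a k - a ·) c ∧
    a k ∣ digitSum k a c - digitSum k a c'

section Digits
variable {k : ℕ} {a c : ℕ → ℤ}

lemma Refines.refl (hc : 0 ≤ c) : Refines k a c c :=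
  ⟨hc, le_rfl, le_rfl, by simp⟩

lemma Refines.trans {c' c'' : ℕ → ℤ} (h₁ : Refines k a c'' c') (h₂ : Refines k a c' c) :
    Refines k a c'' c :=
  ⟨h₁.1, h₁.2.1.trans h₂.2.1, h₁.2.2.1.trans h₂.2.2.1, by
    simpa using dvd_add h₂.2.2.2 h₁.2.2.2⟩

lemma IsReduced.digitSum_le {w : ℕ → ℤ} (hc : IsReduced k a c) (hw : ∀ j ∈ Ico 1 k, 0 ≤ w j) :
    digitSum k w c ≤ digitSum k w (maxDigits a) :=
  digitSum_le_digitSum hw fun j hj => Int.le_sub_one_of_lt (hc j hj)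

lemma dvd_sub_digitSum_iff {n v : ℤ} (hnv : a k ∣ n + v) :
    a k ∣ n - digitSum k a c ↔ a k ∣ v - digitSum k (a k - a ·) c := by
  have hsum := digitSum_add_digitSum_sub (k := k) (w := a) (c := c) (a k)
  rw [show v - digitSum k (a k - a ·) c = n + v - a k * digitSum k 1 c - (n - digitSum k a c) by
    linarith, dvd_sub_right (dvd_sub hnv (dvd_mul_right _ _))]

lemma exists_dvd_sub_digitSum (hk : 1 ≤ k) (hq : a k ≠ 0) (hgcd : (Icc 1 k).gcd a = 1) (r : ℤ) :
    ∃ c, 0 ≤ c ∧ a k ∣ r - digitSum k a c := by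
  obtain ⟨z, hz⟩ := (Icc 1 k).gcd_eq_sum_mul a
  rw [hgcd, ← Ico_add_one_right_eq_Icc, sum_Ico_succ_top hk] at hz
  refine ⟨fun j => r * z j % a k, fun j => Int.emod_nonneg _ hq,
    r * z k + ∑ j ∈ Ico 1 k, r * z j / a k * a j, ?_⟩
  simp only [digitSum, Int.emod_def, sub_mul, sum_sub_distrib, mul_add, mul_sum]
  have hrz : ∑ j ∈ Ico 1 k, r * z j * a j = r * ∑ j ∈ Ico 1 k, a j * z j := by
    rw [mul_sum]; exact sum_congr rfl fun _ _ => by ring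
  have hq' : ∑ j ∈ Ico 1 k, a k * (r * z j / a k) * a j =
      ∑ j ∈ Ico 1 k, a k * (r * z j / a k * a j) := sum_congr rfl fun _ _ => by ring
  rw [hrz, hq']
  linear_combination r * hz

end Digits

section Increasing
variable {k : ℕ} {a : ℕ → ℤ} (hinc : ∀ i < k, a i < a (i + 1))
include hinc

lemma monotoneOn_of_lt_succ : MonotoneOn a (Set.Iic k) :=
  (strictMonoOn_Iic_of_lt_succ fun m hm => by simpa using hinc m hm).monotoneOn

lemma le_last {j : ℕ} (hj : j ≤ k) : a j ≤ a k :=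
  monotoneOn_of_lt_succ hinc hj (Set.mem_Iic.2 le_rfl) hj

lemma sub_nonneg_of_mem_Ico (j : ℕ) (hj : j ∈ Ico 1 k) : 0 ≤ a k - a j :=
  sub_nonneg.2 (le_last hinc (mem_Ico.1 hj).2.le)

variable (ha0 : a 0 = 0)
include ha0

lemma nonneg_of_le {j : ℕ} (hj : j ≤ k) : 0 ≤ a j :=
  ha0 ▸ monotoneOn_of_lt_succ hinc (Set.mem_Iic.2 (Nat.zero_le k)) hj (Nat.zero_le j)

lemma nonneg_of_mem_Ico (j : ℕ) (hj : j ∈ Ico 1 k) : 0 ≤ a j :=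
  nonneg_of_le hinc ha0 (mem_Ico.1 hj).2.le

lemma last_pos (hk : 1 ≤ k) : 0 < a k :=
  (nonneg_of_le hinc ha0 (Nat.sub_le k 1)).trans_lt
    (by simpa [Nat.sub_add_cancel hk] using hinc (k - 1) (by omega))

lemma Represents.add {h : ℕ} {n : ℤ} {c : ℕ → ℤ} (hc : Represents k a h n c) {i : ℕ}
    (hi : i ≤ k) : ∃ c', Represents k a (h + 1) (n + a i) c' := by
  obtain ⟨hc, hval, hcoval, hdvd⟩ := hc
  have hq := nonneg_of_le hinc ha0 le_rfl
  simp only [Represents]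
  push_cast
  rcases Nat.eq_zero_or_pos i with rfl | hi0
  · exact ⟨c, hc, by simpa [ha0], by linarith, by simpa [ha0]⟩
  rcases hi.lt_or_eq with hik | rfl
  · have hi' : i ∈ Ico 1 k := mem_Ico.2 ⟨hi0, hik⟩
    refine ⟨c + Pi.single i 1, add_nonneg hc (Pi.single_nonneg.2 zero_le_one), ?_, ?_, ?_⟩ <;>
      simp only [digitSum_add, digitSum_single, if_pos hi']
    · linarith
    · linarith
    · simpa using hdvd
  · exact ⟨c, hc, by linarith, by linarith, by
      rw [add_sub_right_comm]; exact dvd_add hdvd dvd_rfl⟩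

lemma Represents.mem_nsmul (hk : 1 ≤ k) {h : ℕ} {n : ℤ} {c : ℕ → ℤ}
    (hc : Represents k a h n c) : n ∈ h • {x | ∃ i ≤ k, x = a i} := by
  obtain ⟨hc, hval, hcoval, t, ht⟩ := hc
  have hq := last_pos hinc ha0 hk
  have ht0 : 0 ≤ t := (mul_nonneg_iff_of_pos_left hq).1 (by linarith)
  have hcount : digitSum k 1 c + t ≤ h := by
    have := digitSum_add_digitSum_sub (k := k) (w := a) (c := c) (a k)
    exact le_of_mul_le_mul_left (by linarith) hq
  have hcast : ∀ j, ((c j).toNat : ℤ) = c j := fun j => Int.toNat_of_nonneg (hc j)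
  have h0 : (0 : ℤ) ∈ {x | ∃ i ≤ k, x = a i} := ⟨0, Nat.zero_le k, ha0.symm⟩
  refine Set.nsmul_subset_nsmul_right h0 (m := ∑ j ∈ Ico 1 k, (c j).toNat + t.toNat) ?_ ?_
  · have : ((∑ j ∈ Ico 1 k, (c j).toNat + t.toNat : ℕ) : ℤ) = digitSum k 1 c + t := by
      simp [digitSum, hcast, ht0]
    omega
  · have hn : n = ∑ j ∈ Ico 1 k, (c j).toNat • a j + t.toNat • a k := by
      simp only [nsmul_eq_mul, hcast, Int.toNat_of_nonneg ht0]
      simp only [digitSum] at ht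
      linarith
    rw [hn, add_nsmul]
    exact Set.add_mem_add
      (Set.sum_nsmul_mem_nsmul (x := a) _ _ fun j hj => ⟨j, (mem_Ico.1 hj).2.le, rfl⟩)
      (Set.nsmul_mem_nsmul ⟨k, le_rfl, rfl⟩)

theorem mem_hFold_iff (hk : 1 ≤ k) {h : ℕ} {n : ℤ} :
    n ∈ hFold {x | ∃ i ≤ k, x = a i} h ↔ ∃ c, Represents k a h n c := by
  rw [hFold_eq_nsmul]
  refine ⟨fun hn => ?_, fun ⟨c, hc⟩ => hc.mem_nsmul hinc ha0 hk⟩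
  induction h generalizing n with
  | zero =>
    rw [zero_nsmul, Set.mem_zero] at hn
    subst hn
    exact ⟨0, le_rfl, by simp, by simp, by simp⟩
  | succ h ih =>
    rw [succ_nsmul] at hn
    obtain ⟨m, hm, x, ⟨i, hi, rfl⟩, rfl⟩ := hn
    obtain ⟨c, hc⟩ := ih hm
    exact hc.add hinc ha0 hi

lemma exists_refines_count_lt {c : ℕ → ℤ} (hc : 0 ≤ c) {j : ℕ} (hj : j ∈ Ico 1 k)
    (hcj : a (j + 1) ≤ c j) : ∃ c', Refines k a c' c ∧ digitSum k 1 c' < digitSum k 1 c := by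
  obtain ⟨hj1, hjk⟩ := mem_Ico.1 hj
  have hlt := hinc j hjk
  have hpos := nonneg_of_le hinc ha0 (j := j) (by omega)
  have hle := le_last hinc (j := j + 1) hjk
  set c' := c - Pi.single j (a (j + 1)) + Pi.single (j + 1) (a j)
  have hc' : 0 ≤ c' := by
    refine add_nonneg (sub_nonneg.2 fun i => ?_) (Pi.single_nonneg.2 hpos)
    rcases eq_or_ne i j with rfl | hi
    · simpa using hcj
    · simpa [Pi.single_apply, hi] using hc i
  -- For `j + 1 = k` the new copies of `a k` are not recorded in `c'`: they only shift the
  -- first sum by a multiple of `a k`.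
  have hsum : ∀ w, digitSum k w c' =
      digitSum k w c - a (j + 1) * w j + if j + 1 < k then a j * w (j + 1) else 0 := by
    intro w
    simp [c', digitSum_add, digitSum_sub, digitSum_single, hj]
  refine ⟨c', ⟨hc', ?_, ?_, ?_⟩, ?_⟩ <;> simp only [hsum, Pi.one_apply] <;>
    split_ifs with hjk'
  · linarith [mul_comm (a j) (a (j + 1))]
  · nlinarith
  · nlinarith
  · nlinarith
  · exact ⟨0, by ring⟩
  · exact ⟨a j, by rw [show k = j + 1 by omega]; ring⟩
  · linarith
  · linarith

theorem exists_isReduced_refines {c : ℕ → ℤ} (hc : 0 ≤ c) :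
    ∃ c', IsReduced k a c' ∧ Refines k a c' c := by
  by_cases hred : IsReduced k a c
  · exact ⟨c, hred, .refl hc⟩
  simp only [IsReduced, not_forall, not_lt] at hred
  obtain ⟨j, hj, hcj⟩ := hred
  obtain ⟨c₁, h₁, hlt⟩ := exists_refines_count_lt hinc ha0 hc hj hcj
  obtain ⟨c', hred', h'⟩ := exists_isReduced_refines h₁.1
  exact ⟨c', hred', h'.trans h₁⟩
termination_by (digitSum k 1 c).toNat
decreasing_by
  have := digitSum_nonneg (k := k) (w := 1) (fun _ _ => zero_le_one) h₁.1
  omega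

lemma InSemigroup.exists_isReduced {n : ℤ} (h : InSemigroup k a (a k) n) :
    ∃ c, IsReduced k a c ∧ 0 ≤ c ∧ digitSum k a c ≤ n ∧ a k ∣ n - digitSum k a c := by
  obtain ⟨c, hc, hle, hdvd⟩ := h
  obtain ⟨c', hred, hc', hle', -, hdvd'⟩ := exists_isReduced_refines hinc ha0 hc
  exact ⟨c', hred, hc', hle'.trans hle, by simpa using dvd_add hdvd hdvd'⟩

lemma InSemigroup.exists_isReduced_sub {v : ℤ} (h : InSemigroup k (a k - a ·) (a k) v) :
    ∃ c, IsReduced k a c ∧ 0 ≤ c ∧ digitSum k (a k - a ·) c ≤ v ∧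
      a k ∣ v - digitSum k (a k - a ·) c := by
  obtain ⟨c, hc, hle, hdvd⟩ := h
  obtain ⟨c', hred, hc', -, hle', hdvd'⟩ := exists_isReduced_refines hinc ha0 hc
  refine ⟨c', hred, hc', hle'.trans hle, ?_⟩
  rw [← dvd_sub_digitSum_iff (n := -v) (by simp)] at hdvd ⊢
  simpa using dvd_add hdvd hdvd'

lemma exists_isReduced_dvd (hk : 1 ≤ k) (hgcd : (Icc 1 k).gcd a = 1) (r : ℤ) :
    ∃ c, 0 ≤ c ∧ IsReduced k a c ∧ a k ∣ r - digitSum k a c := by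
  obtain ⟨c, hc, hdvd⟩ := exists_dvd_sub_digitSum hk (last_pos hinc ha0 hk).ne' hgcd r
  obtain ⟨c', hred, hc', -, -, hdvd'⟩ := exists_isReduced_refines hinc ha0 hc
  exact ⟨c', hc', hred, by simpa using dvd_add hdvd hdvd'⟩

lemma inSemigroup_of_lt (hk : 1 ≤ k) (hgcd : (Icc 1 k).gcd a = 1) {n : ℤ}
    (hn : digitSum k a (maxDigits a) - a k < n) : InSemigroup k a (a k) n := by
  obtain ⟨c, hc, hred, hdvd⟩ := exists_isReduced_dvd hinc ha0 hk hgcd n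
  exact .of_lt hc hdvd (by linarith [hred.digitSum_le (nonneg_of_mem_Ico hinc ha0)])

lemma inSemigroup_sub_of_lt (hk : 1 ≤ k) (hgcd : (Icc 1 k).gcd a = 1) {v : ℤ}
    (hv : digitSum k (a k - a ·) (maxDigits a) - a k < v) :
    InSemigroup k (a k - a ·) (a k) v := by
  obtain ⟨c, hc, hred, hdvd⟩ := exists_isReduced_dvd hinc ha0 hk hgcd (-v)
  exact .of_lt hc ((dvd_sub_digitSum_iff (by simp)).1 hdvd)
    (by linarith [hred.digitSum_le (sub_nonneg_of_mem_Ico hinc)])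

theorem mem_hFold_iff_inSemigroup (hk : 1 ≤ k) {h : ℕ}
    (hh : digitSum k 1 (maxDigits a) ≤ h + 1) (n : ℤ) :
    n ∈ hFold {x | ∃ i ≤ k, x = a i} h ↔
      InSemigroup k a (a k) n ∧ InSemigroup k (a k - a ·) (a k) (h * a k - n) := by
  have hnv : a k ∣ n + (h * a k - n) := ⟨h, by ring⟩
  rw [mem_hFold_iff hinc ha0 hk]
  constructor
  · rintro ⟨c, hc, hval, hcoval, hdvd⟩
    exact ⟨⟨c, hc, hval, hdvd⟩, ⟨c, hc, hcoval, (dvd_sub_digitSum_iff hnv).1 hdvd⟩⟩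
  rintro ⟨hn, hv⟩
  obtain ⟨c₁, hred₁, hc₁, hval₁, hdvd₁⟩ := hn.exists_isReduced hinc ha0
  obtain ⟨c₂, hred₂, hc₂, hcoval₂, hdvd₂⟩ := hv.exists_isReduced_sub hinc ha0
  by_cases h₁ : digitSum k (a k - a ·) c₁ ≤ h * a k - n
  · exact ⟨c₁, hc₁, hval₁, h₁, hdvd₁⟩
  by_cases h₂ : digitSum k a c₂ ≤ n
  · exact ⟨c₂, hc₂, h₂, hcoval₂, (dvd_sub_digitSum_iff hnv).2 hdvd₂⟩
  have e₁ := Int.le_of_dvd (sub_pos.2 (not_le.1 h₁))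
    (dvd_sub_comm.1 ((dvd_sub_digitSum_iff hnv).1 hdvd₁))
  have e₂ := Int.le_of_dvd (sub_pos.2 (not_le.1 h₂))
    (dvd_sub_comm.1 ((dvd_sub_digitSum_iff hnv).2 hdvd₂))
  have b₁ := hred₁.digitSum_le (sub_nonneg_of_mem_Ico hinc)
  have b₂ := hred₂.digitSum_le (nonneg_of_mem_Ico hinc ha0)
  have hsum := digitSum_add_digitSum_sub (k := k) (w := a) (c := maxDigits a) (a k)
  have hq := last_pos hinc ha0 hk
  nlinarith [mul_le_mul_of_nonneg_left hh hq.le]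

end Increasing

lemma digitSum_one_maxDigits {k : ℕ} {a : ℕ → ℤ} (hk : 1 ≤ k) :
    digitSum k 1 (maxDigits a) = ∑ i ∈ Icc 2 k, a i - (k - 1) := by
  simp only [digitSum, maxDigits, Pi.one_apply, mul_one, sum_sub_distrib, sum_Ico_add' a,
    Ico_add_one_right_eq_Icc, sum_const, Nat.card_Ico]
  norm_num [Nat.cast_sub hk]

end HFold

open HFold in
theorem stmt12_general (k : ℕ) (a : ℕ → ℤ) (ha0 : a 0 = 0)
    (hinc : ∀ i < k, a i < a (i + 1))
    (hgcd : Finset.gcd (Finset.Icc 1 k) a = 1) :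
    ∃ c d : ℤ, 0 ≤ c ∧ 0 ≤ d ∧
      ∃ C D : Finset ℤ,
        (↑C : Set ℤ) ⊆ Set.Icc 0 (c - 2) ∧ (↑D : Set ℤ) ⊆ Set.Icc 0 (d - 2) ∧
        ∀ h : ℕ, (∑ i ∈ Finset.Icc 2 k, a i) - (k : ℤ) ≤ (h : ℤ) →
          hFold {x | ∃ i ≤ k, x = a i} h =
            ↑C ∪ Set.Icc c ((h : ℤ) * a k - d) ∪ (fun x => (h : ℤ) * a k - x) '' ↑D := by
  classical
  have hk : 1 ≤ k := Nat.one_le_iff_ne_zero.2 fun hk => by simp [hk] at hgcd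
  set P := InSemigroup k a (a k)
  set Q := InSemigroup k (a k - a ·) (a k)
  have hP : ∀ n, P n → 0 ≤ n := fun _ => InSemigroup.nonneg (nonneg_of_mem_Ico hinc ha0)
  have hQ : ∀ v, Q v → 0 ≤ v := fun _ => InSemigroup.nonneg (sub_nonneg_of_mem_Ico hinc)
  have hPB : ∀ n, _ < n → P n := fun _ => inSemigroup_of_lt hinc ha0 hk hgcd
  have hQB : ∀ v, _ < v → Q v := fun _ => inSemigroup_sub_of_lt hinc ha0 hk hgcd
  refine ⟨conductor P, conductor Q, by positivity, by positivity,
    {n ∈ Icc 0 (conductor P - 2) | P n}, {v ∈ Icc 0 (conductor Q - 2) | Q v},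
    fun n hn => by simpa using (mem_filter.1 hn).1, fun v hv => by simpa using (mem_filter.1 hv).1,
    fun h hh => ?_⟩
  have hcount : digitSum k 1 (maxDigits a) ≤ h + 1 := by
    rw [digitSum_one_maxDigits hk]; linarith
  have hsum := digitSum_add_digitSum_sub (k := k) (w := a) (c := maxDigits a) (a k)
  have hq := last_pos hinc ha0 hk
  have hN : (conductor P : ℤ) + conductor Q - 2 ≤ h * a k := by
    nlinarith [conductor_le hP hPB, conductor_le hQ hQB, mul_le_mul_of_nonneg_left hcount hq.le]
  rw [show hFold _ h = {n | P n ∧ Q (h * a k - n)} from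
    Set.ext (mem_hFold_iff_inSemigroup hinc ha0 hk hcount)]
  exact setOf_and_eq_union hP hQ (fun _ => of_conductor_le hP hPB) (not_conductor_sub_one hP hPB)
    (fun _ => of_conductor_le hQ hQB) (not_conductor_sub_one hQ hQB) hN

theorem stmt12 (k : ℕ) (hk : 2 ≤ k) (a : ℕ → ℤ) (ha0 : a 0 = 0)
    (hinc : ∀ i < k, a i < a (i + 1))
    (hgcd : Finset.gcd (Finset.Icc 1 k) a = 1) :
    ∃ c d : ℤ, 0 ≤ c ∧ 0 ≤ d ∧
      ∃ C D : Finset ℤ,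
        (↑C : Set ℤ) ⊆ Set.Icc 0 (c - 2) ∧ (↑D : Set ℤ) ⊆ Set.Icc 0 (d - 2) ∧
        ∀ h : ℕ, (∑ i ∈ Finset.Icc 2 k, a i) - (k : ℤ) ≤ (h : ℤ) →
          hFold {x | ∃ i ≤ k, x = a i} h =
            ↑C ∪ Set.Icc c ((h : ℤ) * a k - d) ∪ (fun x => (h : ℤ) * a k - x) '' ↑D :=
  stmt12_general k a ha0 hinc hgcd
end
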